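/- arXiv:2009.11981 — 2 statements merged into one kernel-verified Lean document; each statement's English description precedes it below -/
import Mathlib

section
/- (Conditional nonnegativity of LS cubature weights) Let Ω ⊂ ℝ^d be compact, F a K-dimensional space of continuous functions on Ω containing the constant function 1, (x_n) ⊂ Ω a point sequence, and (r_n) ⊂ ℝ≥0 discrete weights such that Σ_{n=1}^N r_n u(x_n)v(x_n) → ∫_Ω ω u v dx for all u,v ∈ F as N → ∞, where the induced integral inner product is positive definite on F. Assume the subsequence of points with r_n > 0 is eventually F-unisolvent. Then there exists N₀ such that for all N ≥ N₀, the least-squares cubature weights w_n^{LS} = r_n Σ_{k=1}^K π_k(x_n; r) I[π_k(·;r)] are all nonnegative. -/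
/-!
Write `g_N = ∑_k I[π_k] π_k`, so that `w_n = r_n g_N(x_n)`. By orthonormality `g_N` is the
`[·,·]_N`-Riesz representer of `I` on `F`, while `1` represents the discrete rule
`Q_N[v] = [1, v]_N`; hence `g_N - 1` represents `I - Q_N`, which tends to `0` on `F`. In the
coordinates of a fixed basis this reads `G_N c_N = ε_N` with `ε_N → 0` and discrete Gram
matrices `G_N` converging to the continuous Gram matrix, which is nonsingular by positive
definiteness. So `c_N → 0`, `g_N → 1` uniformly on `Ω`, and eventually `g_N > 0` there.
-/

open Filter Topology Matrix
open LinearMap (BilinForm)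

theorem Matrix.tendsto_of_mulVec_eq {𝕜 n α : Type*} [Field 𝕜] [TopologicalSpace 𝕜]
    [IsTopologicalDivisionRing 𝕜] [T1Space 𝕜] [Fintype n] [DecidableEq n] {l : Filter α}
    {A : α → Matrix n n 𝕜} {A₀ : Matrix n n 𝕜} {c e : α → n → 𝕜} {e₀ : n → 𝕜}
    (hA : Tendsto A l (𝓝 A₀)) (hA₀ : A₀.det ≠ 0) (he : Tendsto e l (𝓝 e₀))
    (hce : ∀ᶠ t in l, A t *ᵥ c t = e t) : Tendsto c l (𝓝 (A₀⁻¹ *ᵥ e₀)) := by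
  have hinv : Tendsto (fun t => (A t)⁻¹) l (𝓝 A₀⁻¹) :=
    have h : ContinuousAt Ring.inverse A₀.det := by
      rw [Ring.inverse_eq_inv']
      exact continuousAt_inv₀ hA₀
    (continuousAt_matrix_inv A₀ h).tendsto.comp hA
  have hdet : ∀ᶠ t in l, (A t).det ≠ 0 :=
    ((continuous_id.matrix_det.tendsto A₀).comp hA).eventually_ne hA₀
  refine (((continuous_fst.matrix_mulVec continuous_snd).tendsto _).comp
    (hinv.prodMk_nhds he)).congr' ?_
  filter_upwards [hce, hdet] with t hct hdett
  simp only [Function.comp_apply, ← hct, mulVec_mulVec,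
    nonsing_inv_mul _ (isUnit_iff_ne_zero.mpr hdett), one_mulVec]

theorem tendstoUniformlyOn_sum_smul_of_tendsto_zero {𝕜 E X ι α : Type*} [NormedField 𝕜]
    [SeminormedAddCommGroup E] [NormedSpace 𝕜 E] [Fintype ι] {S : Set X} {b : ι → X → E}
    (hb : ∀ i, ∃ C, ∀ y ∈ S, ‖b i y‖ ≤ C) {l : Filter α} {c : α → ι → 𝕜}
    (hc : Tendsto c l (𝓝 0)) : TendstoUniformlyOn (fun t => ∑ i, c t i • b i) 0 l S := by
  choose C hC using hb
  have hbound : Tendsto (fun t => ∑ i, ‖c t i‖ * C i) l (𝓝 0) := by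
    simpa using tendsto_finsetSum Finset.univ fun i _ =>
      ((tendsto_pi_nhds.mp hc i).norm).mul_const (C i)
  rw [Metric.tendstoUniformlyOn_iff]
  intro ε hε
  filter_upwards [hbound.eventually_lt_const hε] with t ht y hy
  calc dist ((0 : X → E) y) ((∑ i, c t i • b i) y) = ‖∑ i, c t i • b i y‖ := by
        simp [dist_eq_norm, Finset.sum_apply]
    _ ≤ ∑ i, ‖c t i‖ * C i :=
        (norm_sum_le _ _).trans (Finset.sum_le_sum fun i _ => by
          rw [norm_smul]; exact mul_le_mul_of_nonneg_left (hC i y hy) (norm_nonneg _))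
    _ < ε := ht

namespace LinearMap.BilinForm

variable {R V ι : Type*} [CommRing R] [AddCommGroup V] [Module R V]

def gramMatrix (β : BilinForm R V) (b : ι → V) : Matrix ι ι R :=
  Matrix.of fun i j => β (b i) (b j)

variable [Fintype ι]

theorem gramMatrix_mulVec_apply (β : BilinForm R V) (b : ι → V) (c : ι → R) (j : ι) :
    (β.gramMatrix b *ᵥ c) j = β (b j) (∑ i, c i • b i) := by
  simp [gramMatrix, mulVec, dotProduct, mul_comm]

theorem vecMul_gramMatrix_apply (β : BilinForm R V) (b : ι → V) (a : ι → R) (j : ι) :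
    (a ᵥ* β.gramMatrix b) j = β (∑ i, a i • b i) (b j) := by
  simp [gramMatrix, vecMul, dotProduct]

theorem dotProduct_gramMatrix_mulVec (β : BilinForm R V) (b : ι → V) (a c : ι → R) :
    a ⬝ᵥ β.gramMatrix b *ᵥ c = β (∑ i, a i • b i) (∑ j, c j • b j) := by
  simp only [gramMatrix, mulVec, dotProduct, of_apply, map_sum, map_smul, LinearMap.sum_apply,
    LinearMap.smul_apply, smul_eq_mul, Finset.mul_sum]
  rw [Finset.sum_comm]
  exact Finset.sum_congr rfl fun i _ => Finset.sum_congr rfl fun j _ => by ring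

theorem apply_sum_smul_of_gramMatrix_eq_one [DecidableEq ι] {β : BilinForm R V}
    {p : ι → V} (hp : β.gramMatrix p = 1) {L : V → R}
    (hL : ∀ a : ι → R, L (∑ k, a k • p k) = ∑ k, a k * L (p k))
    {v : V} (hv : v ∈ Submodule.span R (Set.range p)) :
    β v (∑ k, L (p k) • p k) = L v := by
  obtain ⟨a, rfl⟩ := (Submodule.mem_span_range_iff_exists_fun R).mp hv
  rw [← dotProduct_gramMatrix_mulVec, hp, one_mulVec, hL, dotProduct]

end LinearMap.BilinForm

section LimitForm

variable {V ι : Type*} [AddCommGroup V] [Module ℝ V]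
  {β : ℕ → BilinForm ℝ V} {B : V → V → ℝ} {F : Submodule ℝ V}

-- Linearity of `B` on `F` can only come from the approximants: `B` may be an integral, which is
-- junk off integrable functions.
theorem apply_sum_smul_of_tendsto [Fintype ι]
    (hB : ∀ u ∈ F, ∀ v ∈ F, Tendsto (fun N => β N u v) atTop (𝓝 (B u v)))
    {u : V} (hu : u ∈ F) {p : ι → V} (hp : ∀ k, p k ∈ F) (a : ι → ℝ) :
    B u (∑ k, a k • p k) = ∑ k, a k * B u (p k) := by
  refine tendsto_nhds_unique (hB u hu _ (F.sum_mem fun k _ => F.smul_mem _ (hp k))) ?_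
  simpa only [map_sum, map_smul, smul_eq_mul] using
    tendsto_finsetSum Finset.univ fun k _ => (hB u hu _ (hp k)).const_mul (a k)

theorem tendsto_gramMatrix
    (hB : ∀ u ∈ F, ∀ v ∈ F, Tendsto (fun N => β N u v) atTop (𝓝 (B u v)))
    {b : ι → V} (hb : ∀ i, b i ∈ F) :
    Tendsto (fun N => (β N).gramMatrix b) atTop (𝓝 (Matrix.of fun i j => B (b i) (b j))) :=
  tendsto_pi_nhds.mpr fun i => tendsto_pi_nhds.mpr fun j => hB _ (hb i) _ (hb j)

theorem sum_smul_apply_sum_smul_of_tendsto [Fintype ι]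
    (hB : ∀ u ∈ F, ∀ v ∈ F, Tendsto (fun N => β N u v) atTop (𝓝 (B u v)))
    {b : ι → V} (hb : ∀ i, b i ∈ F) (a c : ι → ℝ) :
    B (∑ i, a i • b i) (∑ j, c j • b j) = a ⬝ᵥ (Matrix.of fun i j => B (b i) (b j)) *ᵥ c := by
  have hmem : ∀ a : ι → ℝ, ∑ i, a i • b i ∈ F := fun a =>
    F.sum_mem fun i _ => F.smul_mem _ (hb i)
  refine tendsto_nhds_unique (hB _ (hmem a) _ (hmem c)) ?_
  simp_rw [← LinearMap.BilinForm.dotProduct_gramMatrix_mulVec]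
  exact ((continuous_const.dotProduct (continuous_id.matrix_mulVec continuous_const)).tendsto
    _).comp (tendsto_gramMatrix hB hb)

end LimitForm

section DiscreteForm

variable {X : Type*}

def discreteForm (r : ℕ → ℝ) (x : ℕ → X) (N : ℕ) : BilinForm ℝ (X → ℝ) :=
  LinearMap.mk₂ ℝ (fun u v => ∑ n ∈ Finset.range N, r n * u (x n) * v (x n))
    (fun _ _ _ => by simp only [Pi.add_apply, mul_add, add_mul, Finset.sum_add_distrib])
    (fun _ _ _ => by
      simp only [Pi.smul_apply, smul_eq_mul, Finset.mul_sum]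
      exact Finset.sum_congr rfl fun _ _ => by ring)
    (fun _ _ _ => by simp only [Pi.add_apply, mul_add, Finset.sum_add_distrib])
    (fun _ _ _ => by
      simp only [Pi.smul_apply, smul_eq_mul, Finset.mul_sum]
      exact Finset.sum_congr rfl fun _ _ => by ring)

@[simp]
theorem discreteForm_apply (r : ℕ → ℝ) (x : ℕ → X) (N : ℕ) (u v : X → ℝ) :
    discreteForm r x N u v = ∑ n ∈ Finset.range N, r n * u (x n) * v (x n) :=
  rfl

theorem discreteForm_comm (r : ℕ → ℝ) (x : ℕ → X) (N : ℕ) (u v : X → ℝ) :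
    discreteForm r x N u v = discreteForm r x N v u := by
  simp only [discreteForm_apply, mul_right_comm]

end DiscreteForm

section LeastSquares

variable {X ι : Type*} [Fintype ι] [DecidableEq ι] {S : Set X} {F : Submodule ℝ (X → ℝ)}
  {x : ℕ → X} {r : ℕ → ℝ} {B : (X → ℝ) → (X → ℝ) → ℝ}

theorem det_gram_of_tendsto_ne_zero (hx : ∀ n, x n ∈ S)
    (hB : ∀ u ∈ F, ∀ v ∈ F, Tendsto (fun N => discreteForm r x N u v) atTop (𝓝 (B u v)))
    (hpos : ∀ u ∈ F, (∃ y ∈ S, u y ≠ 0) → 0 < B u u)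
    {b : ι → X → ℝ} (hb : ∀ i, b i ∈ F) {N : ℕ} (hbN : (discreteForm r x N).gramMatrix b = 1) :
    (Matrix.of fun i j => B (b i) (b j)).det ≠ 0 := by
  intro hdet
  obtain ⟨v, hv, hMv⟩ := exists_mulVec_eq_zero_iff.mpr hdet
  set u := ∑ i, v i • b i
  have hBu : B u u = 0 := by
    rw [sum_smul_apply_sum_smul_of_tendsto hB hb, hMv, dotProduct_zero]
  have hu : ∀ y ∈ S, u y = 0 := by
    by_contra! h
    exact (hpos u (F.sum_mem fun i _ => F.smul_mem _ (hb i)) h).ne' hBu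
  refine hv (funext fun l => ?_)
  calc v l = (v ᵥ* (discreteForm r x N).gramMatrix b) l := by rw [hbN, vecMul_one]
    _ = discreteForm r x N u (b l) := LinearMap.BilinForm.vecMul_gramMatrix_apply _ _ _ _
    _ = 0 := by simp [hu (x _) (hx _)]

theorem tendstoUniformlyOn_representer_one
    (hFb : ∀ f ∈ F, ∃ C, ∀ y ∈ S, ‖f y‖ ≤ C) (hone : 1 ∈ F) (hx : ∀ n, x n ∈ S)
    (hB : ∀ u ∈ F, ∀ v ∈ F, Tendsto (fun N => discreteForm r x N u v) atTop (𝓝 (B u v)))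
    (hpos : ∀ u ∈ F, (∃ y ∈ S, u y ≠ 0) → 0 < B u u)
    {π : ℕ → ι → X → ℝ}
    (hπ : ∀ᶠ N in atTop, (∀ k, π N k ∈ F) ∧ (discreteForm r x N).gramMatrix (π N) = 1 ∧
      Submodule.span ℝ (Set.range (π N)) = F) :
    TendstoUniformlyOn (fun N => ∑ k, B 1 (π N k) • π N k) 1 atTop S := by
  obtain ⟨N₀, hN₀⟩ := eventually_atTop.mp hπ
  obtain ⟨hb, hbN₀, hbspan⟩ := hN₀ N₀ le_rfl
  set b := π N₀
  have hcoord : ∀ᶠ N in atTop, ∃ c : ι → ℝ,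
      ∑ i, c i • b i = ∑ k, B 1 (π N k) • π N k - 1 := by
    filter_upwards [hπ] with N hN
    refine (Submodule.mem_span_range_iff_exists_fun ℝ).mp ?_
    rw [hbspan]
    exact F.sub_mem (F.sum_mem fun k _ => F.smul_mem _ (hN.1 k)) hone
  obtain ⟨c, hc⟩ := hcoord.choice
  have hsys : ∀ᶠ N in atTop, (discreteForm r x N).gramMatrix b *ᵥ c N =
      fun j => B 1 (b j) - discreteForm r x N 1 (b j) := by
    filter_upwards [hπ, hc] with N hN hcN
    obtain ⟨hπF, hπN, hπspan⟩ := hN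
    funext j
    rw [LinearMap.BilinForm.gramMatrix_mulVec_apply, hcN, map_sub,
      LinearMap.BilinForm.apply_sum_smul_of_gramMatrix_eq_one hπN
        (apply_sum_smul_of_tendsto hB hone hπF) (hπspan ▸ hb j),
      discreteForm_comm]
  have hε : Tendsto (fun N j => B 1 (b j) - discreteForm r x N 1 (b j)) atTop (𝓝 0) := by
    refine tendsto_pi_nhds.mpr fun j => ?_
    simpa using (hB 1 hone _ (hb j)).const_sub (B 1 (b j))
  have hc0 : Tendsto c atTop (𝓝 0) := by
    simpa using Matrix.tendsto_of_mulVec_eq (tendsto_gramMatrix hB hb)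
      (det_gram_of_tendsto_ne_zero hx hB hpos hb hbN₀) hε hsys
  have hunif := tendstoUniformlyOn_sum_smul_of_tendsto_zero (fun i => hFb _ (hb i)) hc0
  have hshift := hunif.add (tendsto_const_nhds (x := (1 : ℝ)).tendstoUniformlyOn_const S)
  rw [zero_add] at hshift
  refine hshift.congr ?_
  filter_upwards [hc] with N hcN y _
  simp only [Pi.add_apply, hcN, Pi.sub_apply, Pi.one_apply, sub_add_cancel]

end LeastSquares

theorem ls_weights_conditionally_nonneg_general {d K : ℕ}
    (Ω : Set (EuclideanSpace ℝ (Fin d))) (hΩ : IsCompact Ω)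
    (F : Submodule ℝ ((EuclideanSpace ℝ (Fin d)) → ℝ))
    (hFc : ∀ f ∈ F, ContinuousOn f Ω)
    (hone : (fun _ => (1 : ℝ)) ∈ F)
    (ω : (EuclideanSpace ℝ (Fin d)) → ℝ)
    (x : ℕ → EuclideanSpace ℝ (Fin d)) (hx : ∀ n, x n ∈ Ω)
    (r : ℕ → ℝ) (hr : ∀ n, 0 ≤ r n)
    (hconv : ∀ u ∈ F, ∀ v ∈ F,
      Tendsto (fun N => ∑ n ∈ Finset.range N, r n * u (x n) * v (x n)) atTop
        (𝓝 (∫ y in Ω, ω y * u y * v y)))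
    (hposdef : ∀ u ∈ F, (∃ y ∈ Ω, u y ≠ 0) → 0 < ∫ y in Ω, ω y * u y ^ 2)
    -- discrete orthonormal bases of `F` w.r.t. `[u,v]_N`, for all large `N`
    (π : ℕ → Fin K → (EuclideanSpace ℝ (Fin d)) → ℝ)
    (hπ : ∀ᶠ N in atTop,
      (∀ k, π N k ∈ F) ∧
      (∀ k l, (∑ n ∈ Finset.range N, r n * π N k (x n) * π N l (x n)) =
        if k = l then (1 : ℝ) else 0) ∧
      Submodule.span ℝ (Set.range (π N)) = F) :
    ∃ N₀, ∀ N ≥ N₀, ∀ n < N,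
      0 ≤ r n * ∑ k, π N k (x n) * ∫ y in Ω, ω y * π N k y := by
  have hunif := tendstoUniformlyOn_representer_one (B := fun u v => ∫ y in Ω, ω y * u y * v y)
    (fun f hf => hΩ.exists_bound_of_continuousOn (hFc f hf)) hone hx hconv
    (fun u hu h => by simpa only [sq, mul_assoc] using hposdef u hu h)
    (hπ.mono fun N ⟨hπF, hπN, hπspan⟩ => ⟨hπF, Matrix.ext fun k l => hπN k l, hπspan⟩)
  obtain ⟨N₀, hN₀⟩ := eventually_atTop.mp (Metric.tendstoUniformlyOn_iff.mp hunif 1 one_pos)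
  refine ⟨N₀, fun N hN n _ => mul_nonneg (hr n) ?_⟩
  have hclose := hN₀ N hN (x n) (hx n)
  simp only [Pi.one_apply, mul_one, Finset.sum_apply, Pi.smul_apply, smul_eq_mul,
    Real.dist_eq] at hclose
  simp only [mul_comm (π N _ (x n))]
  linarith [(abs_lt.mp hclose).2]

/-- Conditional nonnegativity of the least-squares cubature weights: if the
discrete inner products converge to the (positive definite) continuous inner
product on `F` (with `1 ∈ F`), and the points with positive discrete weight are
eventually `F`-unisolvent, then for all large `N` the least-squares weights
`w_n^{LS} = r_n ∑_k π_k(x_n; r) I[π_k(·; r)]` are nonnegative. -/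
theorem ls_weights_conditionally_nonneg {d K : ℕ}
    (Ω : Set (EuclideanSpace ℝ (Fin d))) (hΩ : IsCompact Ω)
    (F : Submodule ℝ ((EuclideanSpace ℝ (Fin d)) → ℝ))
    (hFc : ∀ f ∈ F, ContinuousOn f Ω)
    (hFdim : Module.finrank ℝ F = K)
    (hone : (fun _ => (1 : ℝ)) ∈ F)
    (ω : (EuclideanSpace ℝ (Fin d)) → ℝ)
    (x : ℕ → EuclideanSpace ℝ (Fin d)) (hx : ∀ n, x n ∈ Ω)
    (r : ℕ → ℝ) (hr : ∀ n, 0 ≤ r n)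
    (hconv : ∀ u ∈ F, ∀ v ∈ F,
      Tendsto (fun N => ∑ n ∈ Finset.range N, r n * u (x n) * v (x n)) atTop
        (𝓝 (∫ y in Ω, ω y * u y * v y)))
    (hposdef : ∀ u ∈ F, (∃ y ∈ Ω, u y ≠ 0) → 0 < ∫ y in Ω, ω y * u y ^ 2)
    (huni : ∃ N₁, ∀ N ≥ N₁, ∀ f ∈ F,
      (∀ n < N, 0 < r n → f (x n) = 0) → ∀ y ∈ Ω, f y = 0)
    -- discrete orthonormal bases of `F` w.r.t. `[u,v]_N`, for all large `N`
    (π : ℕ → Fin K → (EuclideanSpace ℝ (Fin d)) → ℝ)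
    (hπ : ∀ᶠ N in atTop,
      (∀ k, π N k ∈ F) ∧
      (∀ k l, (∑ n ∈ Finset.range N, r n * π N k (x n) * π N l (x n)) =
        if k = l then (1 : ℝ) else 0) ∧
      Submodule.span ℝ (Set.range (π N)) = F) :
    ∃ N₀, ∀ N ≥ N₀, ∀ n < N,
      0 ≤ r n * ∑ k, π N k (x n) * ∫ y in Ω, ω y * π N k y :=
  ls_weights_conditionally_nonneg_general Ω hΩ F hFc hone ω x hx r hr hconv hposdef π hπ
end

section
/- Let Ω ⊂ ℝ^d be compact with positive measure and boundary of measure zero, let ω : Ω → ℝ≥0 be Riemann integrable with nowhere dense zero set, let F ⊂ C(Ω) be a K-dimensional subspace containing constants on which I[f] = ∫_Ω ω f dx is positive definite, and let (x_n) be equidistributed in Ω. Then there exists N₀ such that for every N ≥ N₀, the least-squares cubature formula with data points x_1, …, x_N and discrete weights r_n = |Ω|ω(x_n)/N is exact on F and all its weights are nonnegative. -/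
/-!
The weight of the node `x n` is `r_n T_N(x_n)`, where `T_N = ∑ k π_k I[π_k]` is the representer
of `I` on `F` for the discrete inner product `[·,·]_N`; exactness is its reproducing property.
Writing everything in a fixed basis `ψ` of `F`, `T_N(y) = ψ(y) ⬝ G_N⁻¹ b` with `G_N` the discrete
Gram matrix of `ψ` and `b = I[ψ]`. As `1 ∈ F`, `b = H c` where `H` is the Gram matrix of `ψ` for
`(u, v) ↦ I[u v]` and `ψ ⬝ c = 1`. Equidistribution gives `G_N → H`, and `H` is nonsingular since
`I` is positive definite on `F`, so `T_N → ψ ⬝ H⁻¹ H c = 1` uniformly on the compact set `Ω`.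
Hence `T_N > 0` on `Ω` for large `N`, and the weights are nonnegative because `r_n ≥ 0`.
-/

open MeasureTheory Filter Topology Matrix

lemma Matrix.transpose_mul_self_eq_inv {n R : Type*} [Fintype n] [DecidableEq n] [CommRing R]
    {A G : Matrix n n R} (h : A * G * Aᵀ = 1) : Aᵀ * A = G⁻¹ := by
  rw [Matrix.mul_assoc, mul_eq_one_comm, Matrix.mul_assoc] at h
  exact (inv_eq_right_inv h).symm

lemma Filter.Tendsto.inv_mulVec_mulVec {β n : Type*} [Fintype n] [DecidableEq n] {l : Filter β}
    {G : β → Matrix n n ℝ} {H : Matrix n n ℝ} (hG : Tendsto G l (𝓝 H)) (hH : IsUnit H.det)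
    (c : n → ℝ) : Tendsto (fun b => (G b)⁻¹ *ᵥ (H *ᵥ c)) l (𝓝 c) := by
  have hinv : ContinuousAt Inv.inv H :=
    continuousAt_matrix_inv H (by rw [Ring.inverse_eq_inv']; exact continuousAt_inv₀ hH.ne_zero)
  have hlim : Tendsto (fun b => (G b)⁻¹ *ᵥ (H *ᵥ c)) l (𝓝 (H⁻¹ *ᵥ (H *ᵥ c))) :=
    ((continuous_id.matrix_mulVec continuous_const).tendsto H⁻¹).comp (hinv.tendsto.comp hG)
  rwa [mulVec_mulVec, nonsing_inv_mul H hH, one_mulVec] at hlim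

lemma tendstoUniformlyOn_dotProduct {β X ι : Type*} [Fintype ι] [TopologicalSpace X]
    {S : Set X} (hS : IsCompact S) {ψ : ι → X → ℝ} (hψ : ∀ i, ContinuousOn (ψ i) S)
    {l : Filter β} {e : β → ι → ℝ} {c : ι → ℝ} (he : Tendsto e l (𝓝 c)) :
    TendstoUniformlyOn (fun b y => e b ⬝ᵥ (ψ · y)) (fun y => c ⬝ᵥ (ψ · y)) l S := by
  have hcont : ContinuousOn (fun p : (ι → ℝ) × X => p.1 ⬝ᵥ (ψ · p.2)) (Set.univ ×ˢ S) :=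
    (continuous_fst.dotProduct continuous_snd).comp_continuousOn
      (continuousOn_fst.prodMk (continuousOn_pi.2 fun i => (hψ i).comp continuousOn_snd
        fun p hp => hp.2))
  intro u hu
  obtain ⟨v, hv, hvu⟩ := hS.mem_uniformity_of_prod (f := fun a y => a ⬝ᵥ (ψ · y)) hcont
    (Set.mem_univ c) (symm_le_uniformity hu)
  rw [nhdsWithin_univ] at hv
  filter_upwards [he hv] with b hb y hy using hvu _ hb y hy

section SampleGram

variable {α X ι : Type*}

def sampleGram (s : Finset α) (w : α → ℝ) (x : α → X) (ψ : ι → X → ℝ) : Matrix ι ι ℝ :=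
  Matrix.of fun i j => ∑ n ∈ s, w n * ψ i (x n) * ψ j (x n)

lemma sampleGram_eq_one_iff [DecidableEq ι] {s : Finset α} {w : α → ℝ} {x : α → X}
    {ψ : ι → X → ℝ} :
    sampleGram s w x ψ = 1 ↔
      ∀ i j, ∑ n ∈ s, w n * ψ i (x n) * ψ j (x n) = if i = j then 1 else 0 := by
  simp only [← Matrix.ext_iff, sampleGram, of_apply, one_apply]

variable [Fintype ι]

/-- `w n * lsKernel π L (x n)` is the least-squares cubature weight of the node `x n`. -/
def lsKernel (π : ι → X → ℝ) (L : (X → ℝ) → ℝ) (y : X) : ℝ :=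
  ∑ k, π k y * L (π k)

lemma sum_smul_apply_eq_dotProduct (v : ι → ℝ) (ψ : ι → X → ℝ) (y : X) :
    (∑ i, v i • ψ i) y = v ⬝ᵥ (ψ · y) := by
  simp [Finset.sum_apply, dotProduct]

lemma dotProduct_sampleGram_mulVec (s : Finset α) (w : α → ℝ) (x : α → X) (ψ : ι → X → ℝ)
    (u v : ι → ℝ) :
    u ⬝ᵥ (sampleGram s w x ψ *ᵥ v) =
      ∑ n ∈ s, w n * (u ⬝ᵥ (ψ · (x n))) * (v ⬝ᵥ (ψ · (x n))) := by
  simp only [sampleGram, dotProduct, mulVec, of_apply, Finset.mul_sum, Finset.sum_mul]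
  refine (Finset.sum_congr rfl fun i _ => Finset.sum_comm).trans ?_
  rw [Finset.sum_comm]
  refine Finset.sum_congr rfl fun n _ => ?_
  rw [Finset.sum_comm]
  exact Finset.sum_congr rfl fun i _ => Finset.sum_congr rfl fun j _ => by ring

lemma sampleGram_eq_mul_mul_transpose {s : Finset α} {w : α → ℝ} {x : α → X}
    {π ψ : ι → X → ℝ} {A : Matrix ι ι ℝ} (hA : ∀ y, (π · y) = A *ᵥ (ψ · y)) :
    sampleGram s w x π = A * sampleGram s w x ψ * Aᵀ := by
  ext k l
  have hkl : (A * sampleGram s w x ψ * Aᵀ) k l = A k ⬝ᵥ (sampleGram s w x ψ *ᵥ A l) := by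
    rw [Matrix.mul_assoc]
    rfl
  rw [hkl, dotProduct_sampleGram_mulVec]
  simp only [sampleGram, of_apply, fun k y => congr_fun (hA y) k]
  rfl

lemma eq_zero_of_sampleGram_eq_one [DecidableEq ι] {s : Finset α} {w : α → ℝ} {x : α → X}
    {ψ : ι → X → ℝ} (hψ : sampleGram s w x ψ = 1) {v : ι → ℝ}
    (hv : ∀ n ∈ s, v ⬝ᵥ (ψ · (x n)) = 0) : v = 0 := by
  have h := dotProduct_sampleGram_mulVec s w x ψ v v
  rw [hψ, one_mulVec, Finset.sum_eq_zero fun n hn => by rw [hv n hn, mul_zero]] at h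
  exact dotProduct_self_eq_zero.1 h

lemma sum_mul_lsKernel_mul_eq_of_sampleGram_eq_one [DecidableEq ι] {s : Finset α} {w : α → ℝ}
    {x : α → X} {π : ι → X → ℝ} (hπ : sampleGram s w x π = 1) {L : (X → ℝ) → ℝ}
    (hL : ∀ a : ι → ℝ, L (∑ k, a k • π k) = ∑ k, a k * L (π k))
    {f : X → ℝ} (hf : f ∈ Submodule.span ℝ (Set.range π)) :
    ∑ n ∈ s, w n * lsKernel π L (x n) * f (x n) = L f := by
  obtain ⟨a, rfl⟩ := (Submodule.mem_span_range_iff_exists_fun ℝ).1 hf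
  calc ∑ n ∈ s, w n * lsKernel π L (x n) * (∑ k, a k • π k) (x n)
      = ∑ n ∈ s, w n * ((L <| π ·) ⬝ᵥ (π · (x n))) * (a ⬝ᵥ (π · (x n))) := by
        refine Finset.sum_congr rfl fun n _ => ?_
        simp only [lsKernel, sum_smul_apply_eq_dotProduct, dotProduct, mul_comm (π _ _)]
    _ = (L <| π ·) ⬝ᵥ (sampleGram s w x π *ᵥ a) := (dotProduct_sampleGram_mulVec ..).symm
    _ = L (∑ k, a k • π k) := by
        rw [hπ, one_mulVec, hL, dotProduct_comm]
        rfl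

lemma lsKernel_eq_inv_sampleGram_mulVec_dotProduct [DecidableEq ι] {s : Finset α} {w : α → ℝ}
    {x : α → X} {π ψ : ι → X → ℝ} (hπ : sampleGram s w x π = 1)
    (hπψ : ∀ k, π k ∈ Submodule.span ℝ (Set.range ψ)) {L : (X → ℝ) → ℝ}
    (hL : ∀ a : ι → ℝ, L (∑ j, a j • ψ j) = ∑ j, a j * L (ψ j)) (y : X) :
    lsKernel π L y = ((sampleGram s w x ψ)⁻¹ *ᵥ (L <| ψ ·)) ⬝ᵥ (ψ · y) := by
  obtain ⟨A, hA⟩ : ∃ A : Matrix ι ι ℝ, ∀ k, ∑ j, A k j • ψ j = π k :=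
    ⟨_, fun k => ((Submodule.mem_span_range_iff_exists_fun ℝ).1 (hπψ k)).choose_spec⟩
  have hπA : ∀ y, (π · y) = A *ᵥ (ψ · y) := fun y => by
    ext k
    rw [← hA k, sum_smul_apply_eq_dotProduct]
    rfl
  have hLA : (L <| π ·) = A *ᵥ (L <| ψ ·) := by
    ext k
    rw [← hA k, hL]
    rfl
  have hAA := transpose_mul_self_eq_inv (sampleGram_eq_mul_mul_transpose hπA ▸ hπ)
  calc lsKernel π L y = (A *ᵥ (ψ · y)) ⬝ᵥ (A *ᵥ (L <| ψ ·)) := by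
        rw [← hπA, ← hLA]
        rfl
    _ = ((Aᵀ * A) *ᵥ (L <| ψ ·)) ⬝ᵥ (ψ · y) := by
        rw [← mulVec_mulVec, mulVec_transpose, ← dotProduct_mulVec, dotProduct_comm]
    _ = _ := by rw [hAA]

end SampleGram

lemma eventually_forall_lsKernel_pos {α β X ι : Type*} [Fintype ι] [DecidableEq ι]
    [TopologicalSpace X] {S : Set X} (hS : IsCompact S) {ψ : ι → X → ℝ}
    (hψ : ∀ i, ContinuousOn (ψ i) S) {L : (X → ℝ) → ℝ}
    (hL : ∀ a : ι → ℝ, L (∑ j, a j • ψ j) = ∑ j, a j * L (ψ j))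
    {H : Matrix ι ι ℝ} (hH : IsUnit H.det) {c : ι → ℝ} (hc : ∀ y ∈ S, c ⬝ᵥ (ψ · y) = 1)
    (hHc : H *ᵥ c = (L <| ψ ·)) {l : Filter β} {s : β → Finset α} {w : β → α → ℝ} {x : α → X}
    (hG : Tendsto (fun b => sampleGram (s b) (w b) x ψ) l (𝓝 H)) {π : β → ι → X → ℝ}
    (hπ : ∀ᶠ b in l,
      sampleGram (s b) (w b) x (π b) = 1 ∧ ∀ k, π b k ∈ Submodule.span ℝ (Set.range ψ)) :
    ∀ᶠ b in l, ∀ y ∈ S, 0 < lsKernel (π b) L y := by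
  have hunif := tendstoUniformlyOn_dotProduct hS hψ (hG.inv_mulVec_mulVec hH c)
  filter_upwards [Metric.tendstoUniformlyOn_iff.1 hunif 1 one_pos, hπ] with b hb ⟨hπb, hspan⟩ y hy
  rw [lsKernel_eq_inv_sampleGram_mulVec_dotProduct hπb hspan hL, ← hHc]
  have hdist := hb y hy
  rw [hc y hy, Real.dist_eq] at hdist
  linarith [(abs_lt.1 hdist).2]

section Integral

variable {X ι : Type*} [TopologicalSpace X] [MeasurableSpace X] {μ : Measure X} {Ω : Set X}

def IsBddAEContinuousOn (μ : Measure X) (Ω : Set X) (g : X → ℝ) : Prop :=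
  (∃ C, ∀ y ∈ Ω, |g y| ≤ C) ∧ AEMeasurable g (μ.restrict Ω) ∧
    ∀ᵐ y ∂μ.restrict Ω, ContinuousWithinAt g Ω y

def IsEquidistributed (μ : Measure X) (Ω : Set X) (x : ℕ → X) : Prop :=
  ∀ g, IsBddAEContinuousOn μ Ω g →
    Tendsto (fun N : ℕ => (μ Ω).toReal / N * ∑ n ∈ Finset.range N, g (x n)) atTop
      (𝓝 (∫ y in Ω, g y ∂μ))

noncomputable def weightedGram (μ : Measure X) (Ω : Set X) (ω : X → ℝ) (ψ : ι → X → ℝ) :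
    Matrix ι ι ℝ :=
  Matrix.of fun i j => ∫ y in Ω, ω y * (ψ i y * ψ j y) ∂μ

variable [T2Space X] [OpensMeasurableSpace X] {ω : X → ℝ}

lemma IsBddAEContinuousOn.integrableOn [IsFiniteMeasureOnCompacts μ]
    (hω : IsBddAEContinuousOn μ Ω ω) (hΩ : IsCompact Ω) : IntegrableOn ω Ω μ := by
  obtain ⟨⟨C, hC⟩, hωm, -⟩ := hω
  exact ⟨hωm.aestronglyMeasurable, .restrict_of_bounded (C := C) hΩ.measure_lt_top
    (ae_restrict_of_forall_mem hΩ.measurableSet hC)⟩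

lemma IsBddAEContinuousOn.mul_continuousOn (hω : IsBddAEContinuousOn μ Ω ω) (hΩ : IsCompact Ω)
    {f : X → ℝ} (hf : ContinuousOn f Ω) : IsBddAEContinuousOn μ Ω (fun y => ω y * f y) := by
  obtain ⟨⟨C, hC⟩, hωm, hωc⟩ := hω
  obtain ⟨Cf, hCf⟩ := hΩ.exists_bound_of_continuousOn hf
  refine ⟨⟨C * Cf, fun y hy => ?_⟩, hωm.mul (hf.aemeasurable hΩ.measurableSet), ?_⟩
  · rw [abs_mul]
    exact mul_le_mul (hC y hy) (hCf y hy) (abs_nonneg _) ((abs_nonneg _).trans (hC y hy))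
  · filter_upwards [hωc, ae_restrict_mem hΩ.measurableSet] with y hωy hy
    exact hωy.mul (hf y hy)

lemma IsEquidistributed.tendsto_sampleGram {x : ℕ → X} (hx : IsEquidistributed μ Ω x)
    (hω : IsBddAEContinuousOn μ Ω ω) (hΩ : IsCompact Ω) {ψ : ι → X → ℝ}
    (hψ : ∀ i, ContinuousOn (ψ i) Ω) :
    Tendsto (fun N : ℕ => sampleGram (Finset.range N) (fun n => (μ Ω).toReal * ω (x n) / N) x ψ)
      atTop (𝓝 (weightedGram μ Ω ω ψ)) := by
  refine tendsto_pi_nhds.2 fun i => tendsto_pi_nhds.2 fun j => ?_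
  convert hx _ (hω.mul_continuousOn hΩ ((hψ i).mul (hψ j))) using 2 with N
  · simp only [sampleGram, of_apply, Finset.mul_sum, Pi.mul_apply]
    exact Finset.sum_congr rfl fun n _ => by ring
  · rfl

variable [Fintype ι]

lemma setIntegral_mul_sum (hω : IntegrableOn ω Ω μ) (hΩ : IsCompact Ω) {g : ι → X → ℝ}
    (hg : ∀ i, ContinuousOn (g i) Ω) (a : ι → ℝ) :
    ∫ y in Ω, ω y * ∑ i, a i * g i y ∂μ = ∑ i, a i * ∫ y in Ω, ω y * g i y ∂μ := by
  simp only [Finset.mul_sum, ← integral_const_mul]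
  rw [← integral_finsetSum _ fun i _ => (hω.mul_continuousOn (hg i) hΩ).const_mul (a i)]
  congr 1 with y
  exact Finset.sum_congr rfl fun i _ => by ring

lemma setIntegral_mul_sum_smul (hω : IntegrableOn ω Ω μ) (hΩ : IsCompact Ω) {g : ι → X → ℝ}
    (hg : ∀ i, ContinuousOn (g i) Ω) (a : ι → ℝ) :
    ∫ y in Ω, ω y * (∑ i, a i • g i) y ∂μ = ∑ i, a i * ∫ y in Ω, ω y * g i y ∂μ := by
  simp only [sum_smul_apply_eq_dotProduct, dotProduct, setIntegral_mul_sum hω hΩ hg]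

lemma weightedGram_mulVec_apply (hω : IntegrableOn ω Ω μ) (hΩ : IsCompact Ω) {ψ : ι → X → ℝ}
    (hψ : ∀ i, ContinuousOn (ψ i) Ω) (v : ι → ℝ) (i : ι) :
    (weightedGram μ Ω ω ψ *ᵥ v) i = ∫ y in Ω, ω y * (ψ i y * v ⬝ᵥ (ψ · y)) ∂μ := by
  calc (weightedGram μ Ω ω ψ *ᵥ v) i = ∑ j, v j * ∫ y in Ω, ω y * (ψ i y * ψ j y) ∂μ := by
        simp only [mulVec, dotProduct, weightedGram, of_apply, mul_comm (v _)]
    _ = ∫ y in Ω, ω y * ∑ j, v j * (ψ i y * ψ j y) ∂μ :=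
        (setIntegral_mul_sum hω hΩ (fun j => (hψ i).mul (hψ j)) v).symm
    _ = ∫ y in Ω, ω y * (ψ i y * v ⬝ᵥ (ψ · y)) ∂μ := by
        simp only [dotProduct, Finset.mul_sum, mul_left_comm (ψ i _)]

lemma dotProduct_weightedGram_mulVec (hω : IntegrableOn ω Ω μ) (hΩ : IsCompact Ω)
    {ψ : ι → X → ℝ} (hψ : ∀ i, ContinuousOn (ψ i) Ω) (u v : ι → ℝ) :
    u ⬝ᵥ (weightedGram μ Ω ω ψ *ᵥ v) = ∫ y in Ω, ω y * (u ⬝ᵥ (ψ · y) * v ⬝ᵥ (ψ · y)) ∂μ := by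
  have hv : ContinuousOn (fun y => v ⬝ᵥ (ψ · y)) Ω :=
    continuousOn_finsetSum _ fun j _ => continuousOn_const.mul (hψ j)
  calc u ⬝ᵥ (weightedGram μ Ω ω ψ *ᵥ v)
      = ∑ i, u i * ∫ y in Ω, ω y * (ψ i y * v ⬝ᵥ (ψ · y)) ∂μ := by
        simp only [dotProduct, weightedGram_mulVec_apply hω hΩ hψ]
    _ = ∫ y in Ω, ω y * ∑ i, u i * (ψ i y * v ⬝ᵥ (ψ · y)) ∂μ :=
        (setIntegral_mul_sum hω hΩ (fun i => (hψ i).mul hv) u).symm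
    _ = ∫ y in Ω, ω y * (u ⬝ᵥ (ψ · y) * v ⬝ᵥ (ψ · y)) ∂μ := by
        simp only [dotProduct, Finset.sum_mul, mul_assoc]

lemma isUnit_det_weightedGram [DecidableEq ι] {α : Type*} (hω : IntegrableOn ω Ω μ)
    (hΩ : IsCompact Ω) {ψ : ι → X → ℝ} (hψ : ∀ i, ContinuousOn (ψ i) Ω) {s : Finset α}
    {w : α → ℝ} {x : α → X} (hψx : sampleGram s w x ψ = 1) (hx : ∀ n ∈ s, x n ∈ Ω)
    (hpos : ∀ u ∈ Submodule.span ℝ (Set.range ψ),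
      (∃ y ∈ Ω, u y ≠ 0) → 0 < ∫ y in Ω, ω y * u y ^ 2 ∂μ) :
    IsUnit (weightedGram μ Ω ω ψ).det := by
  rw [isUnit_iff_ne_zero]
  intro hdet
  obtain ⟨v, hv, hHv⟩ := exists_mulVec_eq_zero_iff.2 hdet
  have hvv := dotProduct_weightedGram_mulVec hω hΩ hψ v v
  rw [hHv, dotProduct_zero] at hvv
  obtain ⟨y, hy, hvy⟩ : ∃ y ∈ Ω, v ⬝ᵥ (ψ · y) ≠ 0 := by
    by_contra! h
    exact hv (eq_zero_of_sampleGram_eq_one hψx fun n hn => h _ (hx n hn))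
  have h := hpos _ ((Submodule.mem_span_range_iff_exists_fun ℝ).2 ⟨v, rfl⟩)
    ⟨y, hy, by rwa [sum_smul_apply_eq_dotProduct]⟩
  simp only [sum_smul_apply_eq_dotProduct, sq] at h
  exact h.ne hvv

lemma exists_weightedGram_mulVec_eq (hω : IntegrableOn ω Ω μ) (hΩ : IsCompact Ω)
    {ψ : ι → X → ℝ} (hψ : ∀ i, ContinuousOn (ψ i) Ω)
    (hone : (fun _ => (1 : ℝ)) ∈ Submodule.span ℝ (Set.range ψ)) :
    ∃ c : ι → ℝ, (∀ y, c ⬝ᵥ (ψ · y) = 1) ∧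
      weightedGram μ Ω ω ψ *ᵥ c = fun i => ∫ y in Ω, ω y * ψ i y ∂μ := by
  obtain ⟨c, hc⟩ := (Submodule.mem_span_range_iff_exists_fun ℝ).1 hone
  have hc' : ∀ y, c ⬝ᵥ (ψ · y) = 1 := fun y => by rw [← sum_smul_apply_eq_dotProduct, hc]
  refine ⟨c, hc', ?_⟩
  ext i
  simp only [weightedGram_mulVec_apply hω hΩ hψ, hc', mul_one]

end Integral

theorem ls_cf_exact_and_nonneg_general {d K : ℕ}
    (Ω : Set (EuclideanSpace ℝ (Fin d))) (hΩ : IsCompact Ω)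
    (ω : (EuclideanSpace ℝ (Fin d)) → ℝ) (hω0 : ∀ y ∈ Ω, 0 ≤ ω y)
    (hωbd : ∃ C, ∀ y ∈ Ω, |ω y| ≤ C)
    (hωm : AEMeasurable ω (volume.restrict Ω))
    (hωc : ∀ᵐ y ∂(volume.restrict Ω), ContinuousWithinAt ω Ω y)
    (F : Submodule ℝ ((EuclideanSpace ℝ (Fin d)) → ℝ))
    (hFc : ∀ f ∈ F, ContinuousOn f Ω)
    (hone : (fun _ => (1 : ℝ)) ∈ F)
    (hposdef : ∀ u ∈ F, (∃ y ∈ Ω, u y ≠ 0) → 0 < ∫ y in Ω, ω y * u y ^ 2)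
    (x : ℕ → EuclideanSpace ℝ (Fin d)) (hx : ∀ n, x n ∈ Ω)
    (hequi : ∀ g : (EuclideanSpace ℝ (Fin d)) → ℝ,
      (∃ C, ∀ y ∈ Ω, |g y| ≤ C) →
      AEMeasurable g (volume.restrict Ω) →
      (∀ᵐ y ∂(volume.restrict Ω), ContinuousWithinAt g Ω y) →
      Tendsto (fun N => (volume Ω).toReal / N * ∑ n ∈ Finset.range N, g (x n)) atTop
        (𝓝 (∫ y in Ω, g y)))
    (r : ℕ → ℕ → ℝ) (hr : ∀ N n, r N n = (volume Ω).toReal * ω (x n) / N)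
    -- discrete orthonormal bases of `F` w.r.t. `[u,v]_N`, for all large `N`
    (π : ℕ → Fin K → (EuclideanSpace ℝ (Fin d)) → ℝ)
    (hπ : ∀ᶠ N in atTop,
      (∀ k, π N k ∈ F) ∧
      (∀ k l, (∑ n ∈ Finset.range N, r N n * π N k (x n) * π N l (x n)) =
        if k = l then (1 : ℝ) else 0) ∧
      Submodule.span ℝ (Set.range (π N)) = F) :
    ∃ N₀, ∀ N ≥ N₀,
      (∀ n < N, 0 ≤ r N n * ∑ k, π N k (x n) * ∫ y in Ω, ω y * π N k y) ∧
      (∀ f ∈ F,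
        (∑ n ∈ Finset.range N,
          (r N n * ∑ k, π N k (x n) * ∫ y in Ω, ω y * π N k y) * f (x n)) =
        ∫ y in Ω, ω y * f y) := by
  obtain rfl : r = fun (N : ℕ) n => (volume Ω).toReal * ω (x n) / N := funext₂ hr
  have hωR : IsBddAEContinuousOn volume Ω ω := ⟨hωbd, hωm, hωc⟩
  have hx' : IsEquidistributed volume Ω x := fun g hg => hequi g hg.1 hg.2.1 hg.2.2
  have hωI := hωR.integrableOn hΩ
  have hI : ∀ φ : Fin K → _, (∀ k, φ k ∈ F) → ∀ a : Fin K → ℝ,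
      ∫ y in Ω, ω y * (∑ k, a k • φ k) y = ∑ k, a k * ∫ y in Ω, ω y * φ k y :=
    fun φ hφ => setIntegral_mul_sum_smul hωI hΩ fun k => hFc _ (hφ k)
  obtain ⟨M, hM⟩ := eventually_atTop.1 hπ
  obtain ⟨hψF, hψ, hψspan⟩ := hM M le_rfl
  have hψc : ∀ k, ContinuousOn (π M k) Ω := fun k => hFc _ (hψF k)
  obtain ⟨c, hc, hHc⟩ := exists_weightedGram_mulVec_eq hωI hΩ hψc (hψspan ▸ hone)
  have hH := isUnit_det_weightedGram hωI hΩ hψc (sampleGram_eq_one_iff.2 hψ) (fun n _ => hx n)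
    fun u hu => hposdef u (hψspan ▸ hu)
  have hkernel := eventually_forall_lsKernel_pos hΩ hψc (L := fun f => ∫ y in Ω, ω y * f y)
    (hI _ hψF) hH (fun y _ => hc y) hHc (hx'.tendsto_sampleGram hωR hΩ hψc)
    (hπ.mono fun N hN => ⟨sampleGram_eq_one_iff.2 hN.2.1, fun k => hψspan ▸ hN.1 k⟩)
  obtain ⟨N₀, hN₀⟩ := eventually_atTop.1 (hkernel.and hπ)
  refine ⟨N₀, fun N hN => ?_⟩
  obtain ⟨hT, hπF, hπ, hπspan⟩ := hN₀ N hN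
  refine ⟨fun n _ => mul_nonneg ?_ (hT _ (hx n)).le, fun f hf => ?_⟩
  · exact div_nonneg (mul_nonneg ENNReal.toReal_nonneg (hω0 _ (hx n))) N.cast_nonneg
  · exact sum_mul_lsKernel_mul_eq_of_sampleGram_eq_one (sampleGram_eq_one_iff.2 hπ)
      (L := fun f => ∫ y in Ω, ω y * f y) (hI _ hπF) (hπspan ▸ hf)

/-- Under restrictions (R1)–(R4), for an equidistributed sequence and discrete
weights `r_n = |Ω| ω(x_n) / N`, the least-squares cubature formula is, for all
sufficiently large `N`, exact on `F` and has only nonnegative weights. -/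
theorem ls_cf_exact_and_nonneg {d K : ℕ}
    (Ω : Set (EuclideanSpace ℝ (Fin d))) (hΩ : IsCompact Ω)
    (hpos : 0 < volume Ω) (hbd : volume (frontier Ω) = 0)
    (ω : (EuclideanSpace ℝ (Fin d)) → ℝ) (hω0 : ∀ y ∈ Ω, 0 ≤ ω y)
    (hωbd : ∃ C, ∀ y ∈ Ω, |ω y| ≤ C)
    (hωm : AEMeasurable ω (volume.restrict Ω))
    (hωc : ∀ᵐ y ∂(volume.restrict Ω), ContinuousWithinAt ω Ω y)
    -- the zero set of `ω` is nowhere dense in `Ω` (in the sense of the paper)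
    (hZ : ∀ y ∈ Ω, ω y ≠ 0 → ∃ ε > 0, ∀ z ∈ Ω, ω z = 0 → ε < dist y z)
    (F : Submodule ℝ ((EuclideanSpace ℝ (Fin d)) → ℝ))
    (hFc : ∀ f ∈ F, ContinuousOn f Ω)
    (hFdim : Module.finrank ℝ F = K)
    (hone : (fun _ => (1 : ℝ)) ∈ F)
    (hposdef : ∀ u ∈ F, (∃ y ∈ Ω, u y ≠ 0) → 0 < ∫ y in Ω, ω y * u y ^ 2)
    (x : ℕ → EuclideanSpace ℝ (Fin d)) (hx : ∀ n, x n ∈ Ω)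
    (hequi : ∀ g : (EuclideanSpace ℝ (Fin d)) → ℝ,
      (∃ C, ∀ y ∈ Ω, |g y| ≤ C) →
      AEMeasurable g (volume.restrict Ω) →
      (∀ᵐ y ∂(volume.restrict Ω), ContinuousWithinAt g Ω y) →
      Tendsto (fun N => (volume Ω).toReal / N * ∑ n ∈ Finset.range N, g (x n)) atTop
        (𝓝 (∫ y in Ω, g y)))
    (r : ℕ → ℕ → ℝ) (hr : ∀ N n, r N n = (volume Ω).toReal * ω (x n) / N)
    -- discrete orthonormal bases of `F` w.r.t. `[u,v]_N`, for all large `N`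
    (π : ℕ → Fin K → (EuclideanSpace ℝ (Fin d)) → ℝ)
    (hπ : ∀ᶠ N in atTop,
      (∀ k, π N k ∈ F) ∧
      (∀ k l, (∑ n ∈ Finset.range N, r N n * π N k (x n) * π N l (x n)) =
        if k = l then (1 : ℝ) else 0) ∧
      Submodule.span ℝ (Set.range (π N)) = F) :
    ∃ N₀, ∀ N ≥ N₀,
      (∀ n < N, 0 ≤ r N n * ∑ k, π N k (x n) * ∫ y in Ω, ω y * π N k y) ∧
      (∀ f ∈ F,
        (∑ n ∈ Finset.range N,
          (r N n * ∑ k, π N k (x n) * ∫ y in Ω, ω y * π N k y) * f (x n)) =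
        ∫ y in Ω, ω y * f y) :=
  ls_cf_exact_and_nonneg_general Ω hΩ ω hω0 hωbd hωm hωc F hFc hone hposdef x hx hequi r hr π hπ
end
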